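/- Let K be a field of characteristic zero and n ≥ 4. For every derivation D of T(n) there exist M ∈ T(n) and scalars λ_1,…,λ_{n−1}, c_1,…,c_{n−1} ∈ K such that the derivation D' = D − ad(M) satisfies: D'(N_{12}) = λ_1 N_{12} + c_1 N_{2n}; D'(N_{j(j+1)}) = λ_j N_{j(j+1)} + c_j N_{1n} for every j with 2 ≤ j ≤ n−2; D'(N_{(n−1)n}) = λ_{n−1} N_{(n−1)n} + c_{n−1} N_{1(n−1)}; and D'(N_{ik}) = (Σ_{p=i}^{k−1} λ_p) N_{ik} for every pair i < k with k − i ≥ 2. -/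

import Mathlib

open Matrix

attribute [local instance 100] LieRing.ofAssociativeRing

/-- The Lie algebra `T(n)` of strictly upper triangular `n × n` matrices over `K`. -/
def strictUpper (n : ℕ) (K : Type*) [Field K] :
    LieSubalgebra K (Matrix (Fin n) (Fin n) K) where
  carrier := {M | ∀ i j : Fin n, j ≤ i → M i j = 0}
  add_mem' := by
    intro a b ha hb i j hij
    simp [Matrix.add_apply, ha i j hij, hb i j hij]
  zero_mem' := by intro i j hij; simp
  smul_mem' := by
    intro c a ha i j hij
    simp [Matrix.smul_apply, ha i j hij]
  lie_mem' := by
    intro a b ha hb i j hij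
    have hmul : ∀ x y : Matrix (Fin n) (Fin n) K,
        (∀ i j : Fin n, j ≤ i → x i j = 0) → (∀ i j : Fin n, j ≤ i → y i j = 0) →
        (x * y) i j = 0 := by
      intro x y hx hy
      rw [Matrix.mul_apply]
      apply Finset.sum_eq_zero
      intro s _
      rcases le_or_gt s i with h | h
      · rw [hx i s h, zero_mul]
      · rw [hy s j (hij.trans h.le), mul_zero]
    rw [Ring.lie_def, Matrix.sub_apply, hmul a b ha hb, hmul b a hb ha, sub_zero]

/-- The standard basis element `N_{ik}` (with `i < k`) of `T(n)`. -/
def stdN {n : ℕ} {K : Type*} [Field K] {i k : Fin n} (h : i < k) :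
    strictUpper n K :=
  ⟨Matrix.single i k 1, by
    intro a b hba
    simp only [Matrix.single, Matrix.of_apply, ite_eq_right_iff, one_ne_zero]
    rintro ⟨rfl, rfl⟩
    exact absurd h (not_lt.mpr hba)⟩

/-- The basis element `N_{ik}` of `T(n)`, indexed by natural numbers (`0`-based). -/
def natN (n : ℕ) (K : Type*) [Field K] (i k : ℕ) (h1 : i < k) (h2 : k < n) :
    strictUpper n K :=
  stdN (i := ⟨i, h1.trans h2⟩) (k := ⟨k, h2⟩) (Fin.mk_lt_mk.mpr h1)

/-!
Write `e_m = N_{m,m+1}` for the generators of `T(n)` (indices `0`-based) and `d_m` for the matrix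
of `D e_m`. Differentiating the relations `⁅e_i, e_j⁆ = 0` (`j ≥ i + 2`) and the Serre relations
`⁅e_m, ⁅e_m, e_{m+1}⁆⁆ = ⁅e_{m+1}, ⁅e_m, e_{m+1}⁆⁆ = 0` kills every entry of `d_m` outside row `m`,
column `m + 1` and one special position (the Serre relations need `2 ≠ 0`), and shows
`(d_m)_{m,q} = -(d_q)_{m+1,q+1}`. By this compatibility a single `M` absorbs all entries of the
`d_m` in row `m` and column `m + 1` except the coefficient of `e_m` itself, so that
`(D - ad M) e_m = λ_m e_m + c_m N_special`. Finally `N_{i,k+1} = ⁅N_{i,k}, e_k⁆` and the special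
basis vectors commute with the relevant `N_{i,k}`, so induction on `k` shows that `D - ad M`
multiplies `N_{i,k}` by `λ_i + ⋯ + λ_{k-1}`.
-/

namespace strictUpper

variable {n : ℕ} {K : Type*} [Field K]

/-- Entries indexed by `ℕ` and extended by `0` outside the matrix, so that index arithmetic needs
no bound proofs. -/
def entry (p q : ℕ) : strictUpper n K →ₗ[K] K where
  toFun X := if h : p < n ∧ q < n then (X : Matrix (Fin n) (Fin n) K) ⟨p, h.1⟩ ⟨q, h.2⟩ else 0
  map_add' X Y := by split_ifs <;> simp
  map_smul' c X := by split_ifs <;> simp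

lemma entry_fin (X : strictUpper n K) (u v : Fin n) :
    entry u v X = (X : Matrix (Fin n) (Fin n) K) u v := by
  simp [entry]

@[ext]
lemma ext_entry {X Y : strictUpper n K} (h : ∀ p q, entry p q X = entry p q Y) : X = Y := by
  ext u v
  simpa only [entry_fin] using h u v

lemma entry_eq_zero (X : strictUpper n K) {p q : ℕ} (h : ¬(p < q ∧ q < n)) :
    entry p q X = 0 := by
  simp only [entry, LinearMap.coe_mk, AddHom.coe_mk]
  split_ifs
  · exact X.2 _ _ (Fin.mk_le_mk.mpr (by omega))
  · rfl

lemma entry_natN (p q i k : ℕ) (h1 : i < k) (h2 : k < n) :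
    entry p q (natN n K i k h1 h2) = if p = i ∧ q = k then 1 else 0 := by
  simp only [entry, LinearMap.coe_mk, AddHom.coe_mk, natN, stdN, Matrix.single_apply]
  split_ifs <;> simp_all [Fin.ext_iff]; omega

lemma entry_lie_natN (X : strictUpper n K) (p q i k : ℕ) (h1 : i < k) (h2 : k < n) :
    entry p q ⁅X, natN n K i k h1 h2⁆ =
      (if q = k then entry p i X else 0) - (if p = i then entry k q X else 0) := by
  by_cases hpq : p < n ∧ q < n
  · simp only [entry, LinearMap.coe_mk, AddHom.coe_mk, dif_pos hpq, LieSubalgebra.coe_bracket,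
      Ring.lie_def, Matrix.sub_apply, natN, stdN]
    congr 1 <;> split_ifs <;> subst_vars <;> first | omega | simp_all [Fin.ext_iff]
  · rw [show entry p q ⁅X, natN n K i k h1 h2⁆ = 0 from dif_neg hpq]
    simp only [entry, LinearMap.coe_mk, AddHom.coe_mk]
    split_ifs <;> first | omega | simp

lemma entry_natN_lie (X : strictUpper n K) (p q i k : ℕ) (h1 : i < k) (h2 : k < n) :
    entry p q ⁅natN n K i k h1 h2, X⁆ =
      (if p = i then entry k q X else 0) - (if q = k then entry p i X else 0) := by
  rw [← lie_skew, map_neg, entry_lie_natN, neg_sub]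

lemma natN_congr {i i' k k' : ℕ} (hi : i = i') (hk : k = k') (h1 : i < k) (h2 : k < n)
    (h1' : i' < k') (h2' : k' < n) : natN n K i k h1 h2 = natN n K i' k' h1' h2' := by
  subst hi hk
  rfl

lemma natN_lie_natN (i j k : ℕ) (hij : i < j) (hjk : j < k) (hk : k < n) :
    ⁅natN n K i j hij (hjk.trans hk), natN n K j k hjk hk⁆ = natN n K i k (hij.trans hjk) hk := by
  ext p q
  simp only [entry_lie_natN, entry_natN]
  split_ifs <;> first | omega | simp_all

lemma natN_lie_natN_eq_zero (i j k l : ℕ) (hij : i < j) (hj : j < n) (hkl : k < l) (hl : l < n)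
    (hjk : j ≠ k) (hli : l ≠ i) : ⁅natN n K i j hij hj, natN n K k l hkl hl⁆ = 0 := by
  ext p q
  simp only [entry_lie_natN, entry_natN, map_zero]
  split_ifs <;> first | omega | simp_all

def ofFun (f : ℕ → ℕ → K) : strictUpper n K :=
  ⟨Matrix.of fun u v => if u < v then f u v else 0, fun _ _ h => if_neg (not_lt.mpr h)⟩

lemma entry_ofFun (f : ℕ → ℕ → K) (p q : ℕ) :
    entry p q (ofFun (n := n) f) = if p < q ∧ q < n then f p q else 0 := by
  simp only [entry, ofFun, LinearMap.coe_mk, AddHom.coe_mk, Matrix.of_apply, Fin.mk_lt_mk]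
  split_ifs <;> first | omega | rfl

/-- Together with `specialCol`, the position of the coefficient `c_m` in `(D - ad M) e_m`. -/
def specialRow (m : ℕ) : ℕ := if m = 0 then 1 else 0

def specialCol (n m : ℕ) : ℕ := if m + 2 = n then n - 2 else n - 1

lemma specialRow_lt_specialCol (hn : 3 ≤ n) (m : ℕ) : specialRow m < specialCol n m := by
  unfold specialRow specialCol
  split_ifs <;> omega

lemma specialCol_lt (hn : 0 < n) (m : ℕ) : specialCol n m < n := by
  unfold specialCol
  split_ifs <;> omega

section Derivation

variable (D : LieDerivation K (strictUpper n K) (strictUpper n K))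

def coeff (m p q : ℕ) : K :=
  if hm : m + 1 < n then entry p q (D (natN n K m (m + 1) m.lt_succ_self hm)) else 0

lemma entry_apply_natN_succ (m p q : ℕ) (h : m < m + 1) (hm : m + 1 < n) :
    entry p q (D (natN n K m (m + 1) h hm)) = coeff D m p q := by
  rw [coeff, dif_pos hm]

lemma coeff_of_le (m : ℕ) {p q : ℕ} (h : q ≤ p) : coeff D m p q = 0 := by
  unfold coeff
  split_ifs
  · exact entry_eq_zero _ (by omega)
  · rfl

lemma coeff_commute {i j : ℕ} (hij : i + 2 ≤ j) (hj : j + 1 < n) (p q : ℕ) :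
    (if p = i then coeff D j (i + 1) q else 0) - (if q = i + 1 then coeff D j p i else 0) +
      ((if q = j + 1 then coeff D i p j else 0) - (if p = j then coeff D i (j + 1) q else 0))
      = 0 := by
  have h := congrArg (entry p q) (D.apply_lie_eq_add
    (natN n K i (i + 1) i.lt_succ_self (by omega)) (natN n K j (j + 1) j.lt_succ_self hj))
  rw [natN_lie_natN_eq_zero _ _ _ _ _ _ _ _ (by omega) (by omega), map_zero, map_add,
    entry_natN_lie, entry_lie_natN] at h
  simpa only [entry_apply_natN_succ, map_zero] using h.symm

lemma coeff_eq_zero_of_commute {m p q : ℕ} (hm : m + 1 < n) (hpq : p < q) (hq : q < n)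
    (h : q + 2 ≤ m ∨ (1 ≤ p ∧ p < m ∧ q ≠ m + 1) ∨ m + 3 ≤ p ∨
      (p ≠ m ∧ m + 2 ≤ q ∧ q + 1 < n)) :
    coeff D m p q = 0 := by
  rcases h with h | h | h | h
  · simpa (disch := omega) [if_pos, if_neg] using coeff_commute D h hm p (q + 1)
  · simpa (disch := omega) [if_pos, if_neg] using
      coeff_commute D (i := p - 1) (by omega) hm (p - 1) q
  · simpa (disch := omega) [if_pos, if_neg] using
      coeff_commute D (i := m) (j := p - 1) (by omega) (by omega) (p - 1) q
  · simpa (disch := omega) [if_pos, if_neg] using coeff_commute D h.2.1 h.2.2 p (q + 1)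

lemma coeff_add_coeff_eq_zero {m q : ℕ} (hmq : m + 2 ≤ q) (hq : q + 1 < n) :
    coeff D m m q + coeff D q (m + 1) (q + 1) = 0 := by
  have h := coeff_commute D hmq hq m (q + 1)
  simp (disch := omega) only [if_neg, if_true, sub_zero] at h
  linear_combination h

lemma coeff_serre_left {m : ℕ} (hm : m + 2 < n) (p q : ℕ) :
    (if q = m + 2 then coeff D m p m else 0) =
      2 * (if p = m then coeff D m (m + 2) q else 0) := by
  have hg := D.apply_lie_eq_add (natN n K m (m + 1) m.lt_succ_self (by omega))
    (natN n K (m + 1) (m + 2) (by omega) hm)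
  have h := D.apply_lie_eq_add (natN n K m (m + 1) m.lt_succ_self (by omega))
    (natN n K m (m + 2) (by omega) hm)
  rw [natN_lie_natN] at hg
  rw [natN_lie_natN_eq_zero _ _ _ _ _ _ _ _ (by omega) (by omega), map_zero, hg] at h
  have h' := congrArg (entry p q) h
  simp only [map_add, map_zero, entry_natN_lie, entry_lie_natN, entry_apply_natN_succ] at h'
  split_ifs at h' ⊢ <;> subst_vars <;>
    simp -failIfUnchanged (disch := omega) only [coeff_of_le] at h' ⊢ <;> linear_combination -h'

lemma coeff_serre_right {m : ℕ} (hm : m + 2 < n) (p q : ℕ) :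
    2 * (if q = m + 2 then coeff D (m + 1) p m else 0) =
      (if p = m then coeff D (m + 1) (m + 2) q else 0) := by
  have hg := D.apply_lie_eq_add (natN n K m (m + 1) m.lt_succ_self (by omega))
    (natN n K (m + 1) (m + 2) (by omega) hm)
  have h := D.apply_lie_eq_add (natN n K (m + 1) (m + 2) (by omega) hm)
    (natN n K m (m + 2) (by omega) hm)
  rw [natN_lie_natN] at hg
  rw [natN_lie_natN_eq_zero _ _ _ _ _ _ _ _ (by omega) (by omega), map_zero, hg] at h
  have h' := congrArg (entry p q) h
  simp only [map_add, map_zero, entry_natN_lie, entry_lie_natN, entry_apply_natN_succ] at h'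
  split_ifs at h' ⊢ <;> subst_vars <;>
    simp -failIfUnchanged (disch := omega) only [coeff_of_le] at h' ⊢ <;> linear_combination -h'

lemma coeff_eq_zero_of_serre [NeZero (2 : K)] {m p q : ℕ} (hm : m + 1 < n) (hpq : p < q)
    (hq : q < n) (h : (q = m ∧ m + 2 < n) ∨ p = m + 2 ∨ q + 1 = m ∨ (1 ≤ m ∧ p = m + 1)) :
    coeff D m p q = 0 := by
  rcases h with ⟨rfl, hm2⟩ | rfl | rfl | ⟨hm1, rfl⟩
  · simpa (disch := omega) [if_pos, if_neg] using coeff_serre_left D hm2 p (q + 2)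
  · have h := coeff_serre_left D (m := m) (by omega) m q
    simp (disch := omega) only [if_neg] at h
    exact (mul_eq_zero.mp h.symm).resolve_left two_ne_zero
  · have h := coeff_serre_right D (m := q) (by omega) p (q + 2)
    simp (disch := omega) only [if_neg] at h
    exact (mul_eq_zero.mp h).resolve_left two_ne_zero
  · obtain ⟨k, rfl⟩ : ∃ k, m = k + 1 := ⟨m - 1, by omega⟩
    simpa (disch := omega) [if_pos, if_neg] using (coeff_serre_right D (m := k) (by omega) k q).symm

lemma coeff_eq_zero [NeZero (2 : K)] {m p q : ℕ} (hm : m + 1 < n) (hpq : p < q) (hq : q < n)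
    (hpm : p ≠ m) (hqm : q ≠ m + 1) (hspecial : ¬(p = specialRow m ∧ q = specialCol n m)) :
    coeff D m p q = 0 := by
  by_cases hc : q + 2 ≤ m ∨ (1 ≤ p ∧ p < m ∧ q ≠ m + 1) ∨ m + 3 ≤ p ∨
      (p ≠ m ∧ m + 2 ≤ q ∧ q + 1 < n)
  · exact coeff_eq_zero_of_commute D hm hpq hq hc
  · apply coeff_eq_zero_of_serre D hm hpq hq
    unfold specialRow specialCol at hspecial
    split_ifs at hspecial <;> omega

/-- Column `q < n - 1` is read off column `q + 1` of `d_q`, the last column row by row from the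
rows `p - 1` of the `d_{p-1}`; `coeff_add_coeff_eq_zero` says the two recipes agree where both
apply. The entry `(0, n - 1)`, where `p - 1` truncates, is central and irrelevant. -/
def normalizer : strictUpper n K :=
  ofFun fun p q => if q + 1 < n then coeff D q p (q + 1) else -coeff D (p - 1) (p - 1) q

lemma sub_ad_normalizer_apply_natN_succ [NeZero (2 : K)] (hn : 3 ≤ n) {m : ℕ} (hm : m + 1 < n) :
    (D - LieDerivation.ad K _ (normalizer D)) (natN n K m (m + 1) m.lt_succ_self hm) =
      coeff D m m (m + 1) • natN n K m (m + 1) m.lt_succ_self hm +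
        coeff D m (specialRow m) (specialCol n m) • natN n K (specialRow m) (specialCol n m)
          (specialRow_lt_specialCol hn m) (specialCol_lt (by omega) m) := by
  ext p q
  by_cases hpq : p < q ∧ q < n
  swap
  · simp only [entry_eq_zero _ hpq]
  have hs : ∀ {q'}, q' = m + 1 ∨ p = m → ¬(p = specialRow m ∧ q' = specialCol n m) := by
    unfold specialRow specialCol
    split_ifs <;> omega
  simp only [LieDerivation.sub_apply, LieDerivation.ad_apply_apply, map_sub, map_add, map_smul,
    entry_lie_natN, entry_ofFun, entry_natN, entry_apply_natN_succ, smul_eq_mul, normalizer]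
  by_cases hp : p = m <;> by_cases hq : q = m + 1
  · subst hp hq
    simp [hs]
  · subst hp
    simp (disch := omega) only [if_pos, if_neg, if_true, if_false, hs (Or.inr rfl), mul_zero,
      add_zero, Nat.add_sub_cancel]
    split_ifs with hq'
    · linear_combination coeff_add_coeff_eq_zero D (m := p) (by omega) hq'
    · ring
  · subst hq
    simp (disch := omega) only [if_pos, if_neg, if_true, if_false, hs (Or.inl rfl), mul_zero,
      add_zero]
    ring
  · simp (disch := omega) only [if_neg, mul_zero, zero_add, sub_zero]
    split_ifs with hspecial
    · rw [hspecial.1, hspecial.2, mul_one]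
    · rw [mul_zero]
      exact coeff_eq_zero D hm hpq.1 hpq.2 hp hq hspecial

end Derivation

lemma apply_natN_eq_sum_smul (hn : 3 ≤ n) (D : LieDerivation K (strictUpper n K) (strictUpper n K))
    (lam c : ℕ → K)
    (hD : ∀ m (hm : m + 1 < n), D (natN n K m (m + 1) m.lt_succ_self hm) =
      lam m • natN n K m (m + 1) m.lt_succ_self hm + c m • natN n K (specialRow m) (specialCol n m)
        (specialRow_lt_specialCol hn m) (specialCol_lt (by omega) m))
    {i k : ℕ} (hik : i + 2 ≤ k) (hk : k < n) :
    D (natN n K i k ((Nat.lt_add_of_pos_right two_pos).trans_le hik) hk) =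
      (∑ p ∈ Finset.Ico i k, lam p) •
        natN n K i k ((Nat.lt_add_of_pos_right two_pos).trans_le hik) hk := by
  induction k, hik using Nat.le_induction with
  | base =>
    rw [← natN_lie_natN i (i + 1) (i + 2) i.lt_succ_self (by omega) hk, D.apply_lie_eq_add, hD, hD]
    simp (disch := simp only [specialRow, specialCol]; split <;> omega) only [lie_add, add_lie,
      lie_smul, smul_lie, natN_lie_natN, natN_lie_natN_eq_zero, smul_zero, add_zero]
    rw [Finset.sum_Ico_succ_top (by omega), Finset.sum_Ico_succ_top (by omega), Finset.Ico_self,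
      Finset.sum_empty]
    module
  | succ k hik ih =>
    rw [← natN_lie_natN i k (k + 1) (by omega) k.lt_succ_self hk, D.apply_lie_eq_add, hD, ih]
    simp (disch := simp only [specialRow, specialCol]; split <;> omega) only [lie_add, lie_smul,
      smul_lie, natN_lie_natN, natN_lie_natN_eq_zero, smul_zero, add_zero]
    rw [Finset.sum_Ico_succ_top (by omega)]
    module

end strictUpper

open strictUpper

/-- Indices are `0`-based: `N_{ik}` of the paper is `natN n K (i - 1) (k - 1)`. -/
theorem derivation_canonical_form
    (K : Type*) [Field K] [CharZero K] (n : ℕ) (hn : 4 ≤ n)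
    (D : LieDerivation K (strictUpper n K) (strictUpper n K)) :
    ∃ (M : strictUpper n K) (lam c : ℕ → K),
      (D (natN n K 0 1 (by omega) (by omega)) =
        ⁅M, natN n K 0 1 (by omega) (by omega)⁆ +
          lam 0 • natN n K 0 1 (by omega) (by omega) +
          c 0 • natN n K 1 (n - 1) (by omega) (by omega)) ∧
      (∀ (j : ℕ) (hj1 : 1 ≤ j) (hj2 : j ≤ n - 3),
        D (natN n K j (j + 1) (by omega) (by omega)) =
          ⁅M, natN n K j (j + 1) (by omega) (by omega)⁆ +
            lam j • natN n K j (j + 1) (by omega) (by omega) +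
            c j • natN n K 0 (n - 1) (by omega) (by omega)) ∧
      (D (natN n K (n - 2) (n - 1) (by omega) (by omega)) =
        ⁅M, natN n K (n - 2) (n - 1) (by omega) (by omega)⁆ +
          lam (n - 2) • natN n K (n - 2) (n - 1) (by omega) (by omega) +
          c (n - 2) • natN n K 0 (n - 2) (by omega) (by omega)) ∧
      (∀ (i k : ℕ) (hik : i + 2 ≤ k) (hk : k < n),
        D (natN n K i k (by omega) hk) =
          ⁅M, natN n K i k (by omega) hk⁆ +
            (∑ p ∈ Finset.Ico i k, lam p) • natN n K i k (by omega) hk) := by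
  set M := normalizer D
  have hD (x) : D x = ⁅M, x⁆ + (D - LieDerivation.ad K _ M) x := by
    rw [LieDerivation.sub_apply, LieDerivation.ad_apply_apply, add_sub_cancel]
  have hgen (m) (hm : m + 1 < n) := sub_ad_normalizer_apply_natN_succ D (by omega) hm
  refine ⟨M, fun m => coeff D m m (m + 1), fun m => coeff D m (specialRow m) (specialCol n m),
    ?_, fun j hj1 hj2 => ?_, ?_, fun i k hik hk => ?_⟩
  · rw [hD, hgen 0 (by omega), ← add_assoc]
    congr 3
    exact if_neg (by omega)
  · rw [hD, hgen j (by omega), ← add_assoc]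
    congr 3
    · exact if_neg (by omega)
    · exact if_neg (by omega)
  · have e : natN n K (n - 2) (n - 1) (by omega) (by omega) =
        natN n K (n - 2) (n - 2 + 1) (by omega) (by omega) :=
      natN_congr rfl (by omega) _ _ _ _
    rw [e, hD, hgen (n - 2) (by omega), ← add_assoc]
    congr 3
    · exact if_neg (by omega)
    · exact if_pos (by omega)
  · rw [hD, apply_natN_eq_sum_smul (by omega) _ _ _ hgen hik hk]
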